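/- arXiv:quant-ph/0404070 — 14 statements merged into one kernel-verified Lean document; each statement's English description precedes it below -/
import Mathlib

section
/- For a state property system (Σ, L, ξ) with Cartan map κ, and properties a, b ∈ L, the following are equivalent: (1) a and b are separated by a superselection rule; (2) κ(a ∨ b) = κ(a) ∪ κ(b); (3) κ(a) ∪ κ(b) is a closed set of the closure space (Σ, κ(L)). -/
/-- A state property system: `L` a complete lattice, `xi` assigns to each state
the set of actual properties. -/
structure SPS (S : Type*) (L : Type*) [CompleteLattice L] where
  xi : S → Set L
  bot_not_mem : ∀ p, ⊥ ∉ xi p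
  sInf_mem : ∀ p, ∀ A : Set L, A ⊆ xi p → sInf A ∈ xi p
  le_iff : ∀ a b : L, a ≤ b ↔ ∀ p, a ∈ xi p → b ∈ xi p

/-- The Cartan map. -/
def SPS.kappa {S L : Type*} [CompleteLattice L] (T : SPS S L) (a : L) : Set S :=
  {p | a ∈ T.xi p}

/-- Separation by a superselection rule. -/
def SPS.ssr {S L : Type*} [CompleteLattice L] (T : SPS S L) (a b : L) : Prop :=
  ∀ p, a ⊔ b ∈ T.xi p → a ∈ T.xi p ∨ b ∈ T.xi p

/-- d-classical property. -/
def SPS.dclassical {S L : Type*} [CompleteLattice L] (T : SPS S L) (a : L) : Prop :=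
  ∃ c : L, a ⊔ c = ⊤ ∧ a ⊓ c = ⊥ ∧ T.ssr a c

theorem stmt0 {S L : Type*} [CompleteLattice L] (T : SPS S L) (a b : L) :
    (T.ssr a b ↔ T.kappa (a ⊔ b) = T.kappa a ∪ T.kappa b) ∧
    (T.ssr a b ↔ T.kappa a ∪ T.kappa b ∈ Set.range T.kappa) := by
  have hmono : ∀ c d : L, c ≤ d → T.kappa c ⊆ T.kappa d := fun c d h p hp =>
    (T.le_iff c d).mp h p hp
  have hsub : T.kappa a ∪ T.kappa b ⊆ T.kappa (a ⊔ b) := by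
    rintro p (hp | hp)
    · exact hmono a (a ⊔ b) le_sup_left hp
    · exact hmono b (a ⊔ b) le_sup_right hp
  have h1 : T.ssr a b ↔ T.kappa (a ⊔ b) = T.kappa a ∪ T.kappa b := by
    constructor
    · intro h
      apply Set.Subset.antisymm _ hsub
      intro p hp
      exact h p hp
    · intro h p hp
      have : p ∈ T.kappa a ∪ T.kappa b := h ▸ hp
      exact this
  refine ⟨h1, h1.trans ?_⟩
  constructor
  · intro h; exact ⟨a ⊔ b, h⟩
  · rintro ⟨c, hc⟩
    have hac : a ≤ c := (T.le_iff a c).mpr fun p hp => by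
      have : p ∈ T.kappa c := hc.symm ▸ Or.inl hp
      exact this
    have hbc : b ≤ c := (T.le_iff b c).mpr fun p hp => by
      have : p ∈ T.kappa c := hc.symm ▸ Or.inr hp
      exact this
    apply Set.Subset.antisymm _ hsub
    calc T.kappa (a ⊔ b) ⊆ T.kappa c := hmono _ _ (sup_le hac hbc)
      _ = T.kappa a ∪ T.kappa b := hc
end

section
/- For a state property system (Σ, L, ξ), the image κ(L) of the Cartan map is a closure system on Σ, i.e., ∅ ∈ κ(L) and κ(L) is closed under arbitrary intersections. -/
theorem stmt1 {S L : Type*} [CompleteLattice L] (T : SPS S L) :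
    (∅ : Set S) ∈ Set.range T.kappa ∧
    ∀ G : Set (Set S), G ⊆ Set.range T.kappa → ⋂₀ G ∈ Set.range T.kappa := by
  constructor
  · refine ⟨⊥, ?_⟩
    ext p
    simp [SPS.kappa, T.bot_not_mem p]
  · intro G hG
    refine ⟨sInf {a | T.kappa a ∈ G}, ?_⟩
    ext p
    simp only [SPS.kappa, Set.mem_setOf_eq, Set.mem_sInter]
    constructor
    · intro h F hF
      obtain ⟨a, rfl⟩ := hG hF
      exact (T.le_iff _ a).mp (sInf_le hF) p h
    · intro h
      exact T.sInf_mem p _ (fun a ha => h _ ha)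
end

section
/- If (X, F) is a closure space, then (X, F, ξ̄) with ξ̄(p) = {F ∈ F | p ∈ F} is a state property system, where F is ordered by inclusion (a complete lattice with infimum given by intersection). -/
theorem stmt2 {X : Type*} (F : Set (Set X)) (h0 : (∅ : Set X) ∈ F)
    (hInter : ∀ G : Set (Set X), G ⊆ F → ⋂₀ G ∈ F) :
    let xibar : X → Set (Set X) := fun p => {A | A ∈ F ∧ p ∈ A}
    (∀ p, (∅ : Set X) ∉ xibar p) ∧
    (∀ p, ∀ G : Set (Set X), G ⊆ xibar p → ⋂₀ G ∈ xibar p) ∧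
    (∀ A B, A ∈ F → B ∈ F → (A ⊆ B ↔ ∀ p, A ∈ xibar p → B ∈ xibar p)) := by
  intro xibar
  refine ⟨fun p h => h.2, fun p G hG => ⟨hInter G (fun A hA => (hG hA).1),
    fun A hA => (hG hA).2⟩, fun A B hA hB => ⟨fun hAB p hp => ⟨hB, hAB hp.2⟩,
    fun h p hp => (h p ⟨hA, hp⟩).2⟩⟩
end

section
/- The Cartan map κ of a state property system is injective and satisfies κ(⋀_i a_i) = ⋂_i κ(a_i); moreover a ≤ b iff κ(a) ⊆ κ(b). -/
theorem stmt3 {S L : Type*} [CompleteLattice L] (T : SPS S L) :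
    Function.Injective T.kappa ∧
    (∀ A : Set L, T.kappa (sInf A) = ⋂ a ∈ A, T.kappa a) ∧
    (∀ a b : L, a ≤ b ↔ T.kappa a ⊆ T.kappa b) := by
  have hle : ∀ a b : L, a ≤ b ↔ T.kappa a ⊆ T.kappa b := by
    intro a b
    rw [T.le_iff]
    exact Iff.rfl
  refine ⟨?_, ?_, hle⟩
  · intro a b h
    exact le_antisymm ((hle a b).2 h.subset) ((hle b a).2 h.superset)
  · intro A
    ext p
    simp only [Set.mem_iInter, SPS.kappa, Set.mem_setOf_eq]
    constructor
    · intro h a ha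
      exact (T.le_iff (sInf A) a).1 (sInf_le ha) p h
    · intro h
      exact T.sInf_mem p A fun a ha => h a ha
end

section
/- For a state property system (Σ, L, ξ), every two properties of L are separated by a superselection rule if and only if the associated closure space (Σ, κ(L)) is a topological space (i.e., κ(L) is closed under finite unions and contains Σ). -/
theorem stmt4 {S L : Type*} [CompleteLattice L] (T : SPS S L) :
    (∀ a b : L, T.ssr a b) ↔
      ((Set.univ : Set S) ∈ Set.range T.kappa ∧
       ∀ A B : Set S, A ∈ Set.range T.kappa → B ∈ Set.range T.kappa →
         A ∪ B ∈ Set.range T.kappa) := by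
  have hmono : ∀ a b : L, a ≤ b → ∀ p, a ∈ T.xi p → b ∈ T.xi p := fun a b h =>
    (T.le_iff a b).mp h
  constructor
  · intro h
    constructor
    · exact ⟨⊤, Set.eq_univ_of_forall fun p => by
        have := T.sInf_mem p ∅ (by simp)
        simpa [SPS.kappa] using this⟩
    · rintro A B ⟨a, rfl⟩ ⟨b, rfl⟩
      refine ⟨a ⊔ b, ?_⟩
      ext p
      constructor
      · intro hp
        exact h a b p hp
      · rintro (hp | hp)
        · exact hmono a (a ⊔ b) le_sup_left p hp
        · exact hmono b (a ⊔ b) le_sup_right p hp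
  · rintro ⟨-, hU⟩ a b p hp
    obtain ⟨c, hc⟩ := hU (T.kappa a) (T.kappa b) ⟨a, rfl⟩ ⟨b, rfl⟩
    have ha : a ≤ c := (T.le_iff a c).mpr fun q hq =>
      (hc ▸ (Set.mem_union_left _ hq : q ∈ T.kappa a ∪ T.kappa b) : q ∈ T.kappa c)
    have hb : b ≤ c := (T.le_iff b c).mpr fun q hq =>
      (hc ▸ (Set.mem_union_right _ hq : q ∈ T.kappa a ∪ T.kappa b) : q ∈ T.kappa c)
    have hcp : c ∈ T.xi p := hmono _ _ (sup_le ha hb) p hp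
    have : p ∈ T.kappa a ∪ T.kappa b := hc ▸ hcp
    exact this
end

section
/- In a state property system, if a is a d-classical property then its complement a^c is unique. -/
lemma aux_le {S L : Type*} [CompleteLattice L] (T : SPS S L) (a b c : L)
    (hb2 : a ⊓ b = ⊥) (hc1 : a ⊔ c = ⊤) (hc3 : T.ssr a c) : b ≤ c := by
  rw [T.le_iff]
  intro p hbp
  have htop : (⊤ : L) ∈ T.xi p := by
    have := T.sInf_mem p ∅ (by simp)
    simpa using this
  have := hc3 p (by rw [hc1]; exact htop)
  rcases this with ha | hc
  · exfalso
    have : sInf {a, b} ∈ T.xi p := T.sInf_mem p {a, b} (by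
      intro x hx; rcases hx with rfl | rfl <;> assumption)
    rw [sInf_pair, hb2] at this
    exact T.bot_not_mem p this
  · exact hc

theorem stmt5 {S L : Type*} [CompleteLattice L] (T : SPS S L) (a b c : L)
    (hb1 : a ⊔ b = ⊤) (hb2 : a ⊓ b = ⊥) (hb3 : T.ssr a b)
    (hc1 : a ⊔ c = ⊤) (hc2 : a ⊓ c = ⊥) (hc3 : T.ssr a c) :
    b = c := by
  exact le_antisymm (aux_le T a b c hb2 hc1 hc3) (aux_le T a c b hc2 hb1 hb3)
end

section
/- For a state property system (Σ, L, ξ) and a ∈ L: a is d-classical if and only if κ(a) is clopen in the associated closure space (Σ, κ(L)), i.e., both κ(a) and its complement Σ \ κ(a) belong to κ(L). -/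
lemma SPS.top_mem {S L : Type*} [CompleteLattice L] (T : SPS S L) (p : S) :
    ⊤ ∈ T.xi p := by
  have := T.sInf_mem p ∅ (by simp)
  simpa using this

lemma SPS.inf_mem {S L : Type*} [CompleteLattice L] (T : SPS S L) {p : S} {a b : L}
    (ha : a ∈ T.xi p) (hb : b ∈ T.xi p) : a ⊓ b ∈ T.xi p := by
  have := T.sInf_mem p {a, b} (by intro x hx; rcases hx with rfl | rfl <;> assumption)
  simpa using this

lemma SPS.mem_of_le {S L : Type*} [CompleteLattice L] (T : SPS S L) {p : S} {a b : L}
    (h : a ≤ b) (ha : a ∈ T.xi p) : b ∈ T.xi p := (T.le_iff a b).1 h p ha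

theorem stmt9 {S L : Type*} [CompleteLattice L] (T : SPS S L) (a : L) :
    T.dclassical a ↔
      (T.kappa a ∈ Set.range T.kappa ∧ (T.kappa a)ᶜ ∈ Set.range T.kappa) := by
  constructor
  · rintro ⟨c, hsup, hinf, hssr⟩
    refine ⟨⟨a, rfl⟩, ⟨c, ?_⟩⟩
    ext p
    simp only [SPS.kappa, Set.mem_setOf_eq, Set.mem_compl_iff]
    constructor
    · intro hc ha
      exact T.bot_not_mem p (hinf ▸ T.inf_mem ha hc)
    · intro ha
      rcases hssr p (by rw [hsup]; exact T.top_mem p) with h | h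
      · exact absurd h ha
      · exact h
  · rintro ⟨-, c, hc⟩
    have key : ∀ p, (c ∈ T.xi p ↔ a ∉ T.xi p) := by
      intro p
      have := Set.ext_iff.1 hc p
      simpa [SPS.kappa] using this
    refine ⟨c, ?_, ?_, ?_⟩
    · refine le_antisymm le_top ?_
      rw [T.le_iff]
      intro p _
      by_cases ha : a ∈ T.xi p
      · exact T.mem_of_le le_sup_left ha
      · exact T.mem_of_le le_sup_right ((key p).2 ha)
    · refine le_antisymm ?_ bot_le
      rw [T.le_iff]
      intro p hp
      have ha := T.mem_of_le inf_le_left hp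
      have hcc := T.mem_of_le inf_le_right hp
      exact absurd ha ((key p).1 hcc)
    · intro p _
      by_cases ha : a ∈ T.xi p
      · exact Or.inl ha
      · exact Or.inr ((key p).2 ha)
end

section
/- A state property system (Σ, L, ξ) has 0 and I as its only d-classical properties if and only if the associated closure space (Σ, κ(L)) is connected (the only clopen sets are ∅ and Σ). -/
theorem stmt10 {S L : Type*} [CompleteLattice L] (T : SPS S L) :
    (∀ a : L, T.dclassical a → a = ⊥ ∨ a = ⊤) ↔
      (∀ A : Set S, A ∈ Set.range T.kappa → Aᶜ ∈ Set.range T.kappa →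
        A = ∅ ∨ A = Set.univ) := by
  have htop : ∀ p, (⊤ : L) ∈ T.xi p := fun p => by
    simpa using T.sInf_mem p ∅ (by simp)
  have mono : ∀ a b : L, a ≤ b → ∀ p, a ∈ T.xi p → b ∈ T.xi p :=
    fun a b h => (T.le_iff a b).1 h
  have hinf : ∀ (a b : L) (p : S), a ∈ T.xi p → b ∈ T.xi p → a ⊓ b ∈ T.xi p := by
    intro a b p ha hb
    have := T.sInf_mem p {a, b} (by
      intro x hx
      rcases hx with rfl | hx
      · exact ha
      · cases hx; exact hb)
    simpa using this
  have keq : ∀ a b : L, T.kappa a = T.kappa b → a = b := by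
    intro a b h
    exact le_antisymm
      ((T.le_iff a b).2 fun p hp => (Set.ext_iff.mp h p).mp hp)
      ((T.le_iff b a).2 fun p hp => (Set.ext_iff.mp h p).mpr hp)
  constructor
  · rintro hd A ⟨a, rfl⟩ ⟨b, hb⟩
    have hcover : ∀ p : S, a ∈ T.xi p ∨ b ∈ T.xi p := by
      intro p
      by_cases hp : p ∈ T.kappa a
      · exact Or.inl hp
      · exact Or.inr (show p ∈ T.kappa b by rw [hb]; exact hp)
    have hsup : a ⊔ b = ⊤ := by
      apply keq
      ext p
      simp only [SPS.kappa, Set.mem_setOf_eq]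
      exact ⟨fun _ => htop p, fun _ =>
        (hcover p).elim (mono a _ le_sup_left p) (mono b _ le_sup_right p)⟩
    have hinfb : a ⊓ b = ⊥ := by
      apply keq
      ext p
      simp only [SPS.kappa, Set.mem_setOf_eq]
      constructor
      · intro h
        have ha : a ∈ T.xi p := mono _ a inf_le_left p h
        have hbp : b ∈ T.xi p := mono _ b inf_le_right p h
        have : p ∈ T.kappa a ∩ (T.kappa a)ᶜ := ⟨ha, show p ∈ (T.kappa a)ᶜ by rw [← hb]; exact hbp⟩
        simp at this
      · intro h; exact absurd h (T.bot_not_mem p)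
    have hdc : T.dclassical a :=
      ⟨b, hsup, hinfb, fun p _ => hcover p⟩
    rcases hd a hdc with rfl | rfl
    · left; ext p; simp only [SPS.kappa, Set.mem_setOf_eq, Set.mem_empty_iff_false,
        iff_false]
      exact T.bot_not_mem p
    · right; ext p; simp only [SPS.kappa, Set.mem_setOf_eq, Set.mem_univ, iff_true]
      exact htop p
  · rintro hc a ⟨c, hsup, hinfb, hssr⟩
    have hcomp : (T.kappa a)ᶜ = T.kappa c := by
      ext p
      simp only [SPS.kappa, Set.mem_compl_iff, Set.mem_setOf_eq]
      constructor
      · intro hna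
        rcases hssr p (by rw [hsup]; exact htop p) with h | h
        · exact absurd h hna
        · exact h
      · intro hcp ha
        have : a ⊓ c ∈ T.xi p := hinf a c p ha hcp
        rw [hinfb] at this
        exact T.bot_not_mem p this
    rcases hc (T.kappa a) ⟨a, rfl⟩ (hcomp ▸ ⟨c, rfl⟩) with h | h
    · left
      apply le_bot_iff.mp
      refine (T.le_iff a ⊥).2 fun p hp => ?_
      exact absurd (show p ∈ T.kappa a from hp) (by rw [h]; exact Set.notMem_empty p)
    · right
      apply top_le_iff.mp
      refine (T.le_iff ⊤ a).2 fun p _ => ?_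
      have : p ∈ T.kappa a := by rw [h]; trivial
      exact this
end

section
/- Let (Σ, F) be a closure space. Then (Σ, F) is connected if and only if the state property system G(Σ, F) = (Σ, F, ξ̄), with ξ̄(p) = {F ∈ F | p ∈ F}, is pure nonclassical (its only d-classical properties are ∅ and Σ). -/
/-- Closure of a set in a closure space with closed sets `F`. -/
def clOf {X : Type*} (F : Set (Set X)) (B : Set X) : Set X :=
  ⋂₀ {C | C ∈ F ∧ B ⊆ C}

/-- d-classical member of `F` in the state property system `G(X,F)`:
a complement in the lattice `F` (join = closure of union) separated by a
superselection rule. -/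
def dclassicalCls {X : Type*} (F : Set (Set X)) (A : Set X) : Prop :=
  ∃ Ac ∈ F, clOf F (A ∪ Ac) = Set.univ ∧ A ∩ Ac = ∅ ∧
    ∀ p ∈ clOf F (A ∪ Ac), p ∈ A ∨ p ∈ Ac

theorem stmt11 {X : Type*} (F : Set (Set X)) (h0 : (∅ : Set X) ∈ F)
    (hX : (Set.univ : Set X) ∈ F)
    (hInter : ∀ G : Set (Set X), G ⊆ F → ⋂₀ G ∈ F) :
    (∀ A ∈ F, Aᶜ ∈ F → A = ∅ ∨ A = Set.univ) ↔
      (∀ A ∈ F, dclassicalCls F A → A = ∅ ∨ A = Set.univ) := by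
  constructor
  · rintro hconn A hA ⟨Ac, hAc, hcl, hdisj, hssr⟩
    have hAcomp : Ac = Aᶜ := by
      ext p
      constructor
      · intro hp hpA
        exact Set.eq_empty_iff_forall_notMem.mp hdisj p ⟨hpA, hp⟩
      · intro hp
        rcases hssr p (by rw [hcl]; trivial) with h | h
        · exact absurd h hp
        · exact h
    exact hconn A hA (hAcomp ▸ hAc)
  · intro hpure A hA hAc
    refine hpure A hA ⟨Aᶜ, hAc, ?_, Set.inter_compl_self A, ?_⟩
    · rw [Set.union_compl_self]
      apply Set.eq_univ_of_univ_subset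
      intro p _
      exact fun C hC => hC.2 trivial
    · intro p _
      exact or_not_of_imp id
end

section
/- Let (Σ, L, ξ) be a state property system. The following are equivalent: (1) ξ is injective and for every p, s_ξ(p) := ⋀ξ(p) is an atom of L; (2) for all p, q ∈ Σ, ξ(p) ⊆ ξ(q) implies p = q; (3) every singleton {p} is a closed set of the associated closure space (Σ, κ(L)). -/
lemma SPS.sInf_xi_mem {S L : Type*} [CompleteLattice L] (T : SPS S L) (p : S) :
    sInf (T.xi p) ∈ T.xi p := T.sInf_mem p _ subset_rfl

lemma SPS.mem_iff {S L : Type*} [CompleteLattice L] (T : SPS S L) (p : S) (a : L) :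
    a ∈ T.xi p ↔ sInf (T.xi p) ≤ a := by
  constructor
  · exact fun h => sInf_le h
  · intro h
    exact (T.le_iff _ _).1 h p (T.sInf_xi_mem p)

lemma SPS.sInf_ne_bot {S L : Type*} [CompleteLattice L] (T : SPS S L) (p : S) :
    sInf (T.xi p) ≠ ⊥ := fun h => T.bot_not_mem p (h ▸ T.sInf_xi_mem p)

theorem stmt12 {S L : Type*} [CompleteLattice L] (T : SPS S L) :
    List.TFAE
      [ Function.Injective T.xi ∧ ∀ p, IsAtom (sInf (T.xi p)),
        ∀ p q : S, T.xi p ⊆ T.xi q → p = q,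
        ∀ p : S, ({p} : Set S) ∈ Set.range T.kappa ] := by
  tfae_have 1 → 2
  | ⟨hinj, hatom⟩, p, q, hpq => by
    have h1 : sInf (T.xi q) ≤ sInf (T.xi p) := le_sInf fun a ha => sInf_le (hpq ha)
    have h2 : sInf (T.xi q) = sInf (T.xi p) := by
      rcases lt_or_eq_of_le h1 with h | h
      · exact absurd ((hatom p).2 _ h) (T.sInf_ne_bot q)
      · exact h
    apply hinj
    ext a
    rw [T.mem_iff, T.mem_iff, h2]
  tfae_have 2 → 3
  | h2, p => by
    refine ⟨sInf (T.xi p), ?_⟩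
    ext q
    simp only [SPS.kappa, Set.mem_setOf_eq, Set.mem_singleton_iff]
    constructor
    · intro hq
      refine (h2 p q fun a ha => ?_).symm
      rw [T.mem_iff] at ha ⊢
      exact le_trans (sInf_le hq) ha
    · rintro rfl
      exact T.sInf_xi_mem q
  tfae_have 3 → 1
  | h3 => by
    have key : ∀ p q : S, sInf (T.xi p) ∈ T.xi q → p = q := by
      intro p q hq
      obtain ⟨a, ha⟩ := h3 p
      have hpa : a ∈ T.xi p := by
        have : p ∈ T.kappa a := by rw [ha]; rfl
        exact this
      have haq : a ∈ T.xi q := (T.mem_iff q a).2 (le_trans (sInf_le hq) (sInf_le hpa))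
      have : q ∈ T.kappa a := haq
      rw [ha] at this
      exact this.symm
    constructor
    · intro p q h
      exact key p q (h ▸ T.sInf_xi_mem p)
    · intro p
      refine ⟨T.sInf_ne_bot p, fun b hb => ?_⟩
      by_contra hbne
      have : ¬ b ≤ ⊥ := fun h => hbne (le_bot_iff.1 h)
      rw [T.le_iff] at this
      push_neg at this
      obtain ⟨q, hbq, -⟩ := this
      have hs : sInf (T.xi p) ∈ T.xi q :=
        (T.mem_iff q _).2 (le_trans ((T.mem_iff q b).1 hbq) hb.le)
      have := key p q hs
      subst this
      exact absurd ((T.mem_iff p b).1 hbq) (not_le_of_gt hb)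
  tfae_finish
end

section
/- Let (Σ, L, ξ) be a state property system, ω ⊆ Σ a connection component of the associated closure space (Σ, κ(L)), and s(ω) ∈ L the property with κ(s(ω)) = ω. Then (Σ_ω, L_ω, ξ_ω) with Σ_ω = ω, L_ω = [0, s(ω)], and ξ_ω(p) = ξ(p) ∩ L_ω is a state property system. -/
/-- `B` is a closed set of the subspace induced on `A` by the closure space
with closed sets `F`. -/
def IsClosedIn {X : Type*} (F : Set (Set X)) (A B : Set X) : Prop :=
  ∃ C ∈ F, B = C ∩ A

/-- A subset `A` is connected if the only subsets of `A` that are clopen in the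
induced subspace are `∅` and `A`. -/
def ConnSub {X : Type*} (F : Set (Set X)) (A : Set X) : Prop :=
  ∀ B ⊆ A, IsClosedIn F A B → IsClosedIn F A (A \ B) → B = ∅ ∨ B = A

/-- The connection component of a point. -/
def connComp {X : Type*} (F : Set (Set X)) (x : X) : Set X :=
  ⋃₀ {A | x ∈ A ∧ ConnSub F A}

theorem stmt16 {S L : Type*} [CompleteLattice L] (T : SPS S L) (a : L)
    (hcomp : ∃ p0 : S, T.kappa a = connComp (Set.range T.kappa) p0) :
    ∃ T' : SPS {p : S // p ∈ T.kappa a} (Set.Iic a),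
      ∀ p, T'.xi p = {b : Set.Iic a | (b : L) ∈ T.xi p.1} := by
  refine ⟨{ xi := fun p => {b : Set.Iic a | (b : L) ∈ T.xi p.1}
          , bot_not_mem := ?_, sInf_mem := ?_, le_iff := ?_ }, fun p => rfl⟩
  · intro p h
    exact T.bot_not_mem p.1 (by simpa [Set.Iic.coe_bot] using h)
  · intro p A hA
    have h1 : (insert a ((↑) '' A) : Set L) ⊆ T.xi p.1 := by
      rintro x (rfl | ⟨b, hb, rfl⟩)
      · exact p.2
      · exact hA hb
    have := T.sInf_mem p.1 _ h1
    rwa [sInf_insert] at this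
  · intro b c
    constructor
    · intro hbc p hb
      exact (T.le_iff (b : L) (c : L)).1 hbc p.1 hb
    · intro h
      rw [← Subtype.coe_le_coe]
      refine (T.le_iff (b : L) (c : L)).2 ?_
      intro p hb
      have hpa : a ∈ T.xi p := (T.le_iff (b : L) a).1 b.2 p hb
      exact h ⟨p, hpa⟩ hb
end

section
/- Under the hypotheses of the decomposition, each component system (Σ_ω, L_ω, ξ_ω) is a pure nonclassical state property system: its only d-classical properties are 0 and s(ω). -/
/-!
If `b` is d-classical in the component `κ a` with complement `c`, the superselection rule makes
every state of `κ a` carry `b` or `c`, and `b ⊓ c = ⊥` forbids both. So `κ b` and `κ c ∩ κ a`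
partition `κ a` into two sets closed in the Cartan closure space. A connection component is
connected, hence one part is empty, and injectivity of `κ` gives `b = ⊥` or `b = a`.
-/

section ClosureSpace

variable {X : Type*} {F : Set (Set X)}

lemma IsClosedIn.inter_of_subset {A A' B : Set X} (hB : IsClosedIn F A' B) (hA : A ⊆ A') :
    IsClosedIn F A (B ∩ A) := by
  obtain ⟨C, hC, rfl⟩ := hB
  exact ⟨C, hC, by rw [Set.inter_assoc, Set.inter_eq_right.2 hA]⟩

lemma diff_inter_eq_diff_inter_of_subset {A A' B : Set X} (hA : A ⊆ A') :
    A \ (B ∩ A) = (A' \ B) ∩ A := by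
  ext z
  constructor
  · rintro ⟨hzA, hz⟩
    exact ⟨⟨hA hzA, fun hzB => hz ⟨hzB, hzA⟩⟩, hzA⟩
  · rintro ⟨⟨-, hzB⟩, hzA⟩
    exact ⟨hzA, fun hz => hzB hz.1⟩

lemma ConnSub.inter_eq_empty_or_eq {A A' B : Set X} (hconn : ConnSub F A) (hA : A ⊆ A')
    (hB : IsClosedIn F A' B) (hB' : IsClosedIn F A' (A' \ B)) :
    B ∩ A = ∅ ∨ B ∩ A = A := by
  refine hconn (B ∩ A) Set.inter_subset_right (hB.inter_of_subset hA) ?_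
  rw [diff_inter_eq_diff_inter_of_subset hA]
  exact hB'.inter_of_subset hA

lemma subset_connComp {A : Set X} {x : X} (hx : x ∈ A) (hA : ConnSub F A) :
    A ⊆ connComp F x :=
  fun _ hz => ⟨A, ⟨hx, hA⟩, hz⟩

/-- Every connected set through `x` lies entirely inside or entirely outside a clopen subset
of `connComp F x`, according to whether `x` lies in it. -/
lemma connSub_connComp (F : Set (Set X)) (x : X) : ConnSub F (connComp F x) := by
  intro B hB hB₁ hB₂
  have hcut : ∀ A, x ∈ A → ConnSub F A → B ∩ A = ∅ ∨ B ∩ A = A := fun A hxA hA =>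
    hA.inter_eq_empty_or_eq (subset_connComp hxA hA) hB₁ hB₂
  by_cases hx : x ∈ B
  · refine Or.inr (hB.antisymm ?_)
    rintro y ⟨A, ⟨hxA, hA⟩, hyA⟩
    rcases hcut A hxA hA with h | h
    · exact (h ▸ ⟨hx, hxA⟩ : x ∈ (∅ : Set X)).elim
    · exact (h.symm ▸ hyA : y ∈ B ∩ A).1
  · refine Or.inl (Set.eq_empty_of_forall_notMem fun y hy => ?_)
    obtain ⟨A, ⟨hxA, hA⟩, hyA⟩ := hB hy
    rcases hcut A hxA hA with h | h
    · exact (h ▸ ⟨hy, hyA⟩ : y ∈ (∅ : Set X))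
    · exact hx (h.symm ▸ hxA : x ∈ B ∩ A).1

end ClosureSpace

namespace SPS

variable {S L : Type*} [CompleteLattice L] (T : SPS S L)

lemma kappa_subset_kappa_iff {a b : L} : T.kappa a ⊆ T.kappa b ↔ a ≤ b :=
  (T.le_iff a b).symm

lemma kappa_injective : Function.Injective T.kappa := fun _ _ h =>
  le_antisymm ((T.kappa_subset_kappa_iff).1 h.le) ((T.kappa_subset_kappa_iff).1 h.ge)

lemma kappa_bot : T.kappa ⊥ = ∅ :=
  Set.eq_empty_of_forall_notMem T.bot_not_mem

lemma kappa_inf (a b : L) : T.kappa (a ⊓ b) = T.kappa a ∩ T.kappa b := by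
  ext p
  refine ⟨fun h => ⟨?_, ?_⟩, fun ⟨ha, hb⟩ => ?_⟩
  · exact (T.kappa_subset_kappa_iff.2 inf_le_left) h
  · exact (T.kappa_subset_kappa_iff.2 inf_le_right) h
  · have := T.sInf_mem p {a, b} (Set.pair_subset ha hb)
    rwa [sInf_pair] at this

/-- `κ b` is clopen in `κ a`, its complement being `κ c ∩ κ a`. -/
lemma eq_bot_or_eq_of_connSub {a b c : L} (hconn : ConnSub (Set.range T.kappa) (T.kappa a))
    (hba : b ≤ a) (hbc : b ⊓ c = ⊥) (hcover : ∀ p ∈ T.kappa a, b ∈ T.xi p ∨ c ∈ T.xi p) :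
    b = ⊥ ∨ b = a := by
  have hdisj : T.kappa b ∩ T.kappa c = ∅ := by rw [← kappa_inf, hbc, kappa_bot]
  have hsub : T.kappa b ⊆ T.kappa a := T.kappa_subset_kappa_iff.2 hba
  have hclosed : IsClosedIn (Set.range T.kappa) (T.kappa a) (T.kappa b) :=
    ⟨T.kappa b, Set.mem_range_self b, (Set.inter_eq_left.2 hsub).symm⟩
  have hcompl : IsClosedIn (Set.range T.kappa) (T.kappa a) (T.kappa a \ T.kappa b) := by
    refine ⟨T.kappa c, Set.mem_range_self c, Set.ext fun p => ⟨?_, ?_⟩⟩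
    · rintro ⟨hp, hpb⟩
      exact ⟨(hcover p hp).resolve_left hpb, hp⟩
    · rintro ⟨hpc, hp⟩
      exact ⟨hp, fun hpb => (hdisj.subset ⟨hpb, hpc⟩ : p ∈ (∅ : Set S))⟩
  rcases hconn _ hsub hclosed hcompl with h | h
  · exact Or.inl (T.kappa_injective (h.trans T.kappa_bot.symm))
  · exact Or.inr (T.kappa_injective h)

end SPS

theorem stmt17 {S L : Type*} [CompleteLattice L] (T : SPS S L) (a : L)
    (hcomp : ∃ p0 : S, T.kappa a = connComp (Set.range T.kappa) p0) :
    ∀ T' : SPS {p : S // p ∈ T.kappa a} (Set.Iic a),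
      (∀ p, T'.xi p = {b : Set.Iic a | (b : L) ∈ T.xi p.1}) →
      ∀ b : Set.Iic a, T'.dclassical b → b = ⊥ ∨ b = ⊤ := by
  rintro T' hxi b ⟨c, hsup, hinf, hssr⟩
  obtain ⟨p0, hw⟩ := hcomp
  have hconn : ConnSub (Set.range T.kappa) (T.kappa a) := hw ▸ connSub_connComp _ p0
  have hcover : ∀ p ∈ T.kappa a, (b : L) ∈ T.xi p ∨ (c : L) ∈ T.xi p := fun p hp => by
    have htop : b ⊔ c ∈ T'.xi ⟨p, hp⟩ := by rw [hxi, hsup]; exact hp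
    simpa only [hxi, Set.mem_ofPred_eq] using hssr ⟨p, hp⟩ htop
  have hbc : (b : L) ⊓ c = ⊥ := congrArg Subtype.val hinf
  rcases T.eq_bot_or_eq_of_connSub hconn b.2 hbc hcover with h | h
  · exact Or.inl (Subtype.ext h)
  · exact Or.inr (Subtype.ext h)
end

section
/- Let (Σ, L, ξ) be a state property system and a ∈ L. Define Σ' = κ(a), L' = [0, a], and ξ'(p) = ξ(p) ∩ L' for p ∈ Σ'. Then (Σ', L', ξ') is a state property system, and the maps m: Σ' → Σ (inclusion) and n: L → L', n(c) = a ∧ c, form a morphism of state property systems, i.e., for all c ∈ L and p' ∈ Σ': c ∈ ξ(m(p')) ⇔ n(c) ∈ ξ'(p'). -/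
theorem stmt18 {S L : Type*} [CompleteLattice L] (T : SPS S L) (a : L) :
    (∃ T' : SPS {p : S // p ∈ T.kappa a} (Set.Iic a),
      ∀ p, T'.xi p = {b : Set.Iic a | (b : L) ∈ T.xi p.1}) ∧
    (∀ c : L, ∀ p' : {p : S // p ∈ T.kappa a},
      c ∈ T.xi p'.1 ↔
        (⟨a ⊓ c, inf_le_left⟩ : Set.Iic a) ∈
          {b : Set.Iic a | (b : L) ∈ T.xi p'.1}) := by
  constructor
  · refine ⟨⟨fun p => {b : Set.Iic a | (b : L) ∈ T.xi p.1}, ?_, ?_, ?_⟩, fun p => rfl⟩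
    · intro p hp
      exact T.bot_not_mem p.1 (by simpa using hp)
    · intro p A hA
      have h1 : insert a ((↑) '' A) ⊆ T.xi p.1 := by
        rintro x (rfl | ⟨b, hb, rfl⟩)
        · exact p.2
        · exact hA hb
      have h2 := T.sInf_mem p.1 _ h1
      rw [sInf_insert] at h2
      simpa [Set.Iic.coe_sInf] using h2
    · intro b c
      constructor
      · intro hbc p hb
        exact (T.le_iff b c).1 (by exact_mod_cast hbc) p.1 hb
      · intro h
        have : (b : L) ≤ (c : L) := by
          rw [T.le_iff]
          intro p hb
          have hpa : a ∈ T.xi p := (T.le_iff (b : L) a).1 b.2 p hb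
          exact h ⟨p, hpa⟩ hb
        exact_mod_cast this
  · intro c p'
    constructor
    · intro hc
      have h1 : ({a, c} : Set L) ⊆ T.xi p'.1 := by
        rintro x (rfl | rfl)
        · exact p'.2
        · exact hc
      have h2 := T.sInf_mem p'.1 _ h1
      rwa [sInf_pair] at h2
    · intro h
      exact (T.le_iff (a ⊓ c) c).1 inf_le_right p'.1 h
end

section
/- Let (Σ, L, ξ) be a state property system and let C' = {⋀_i a_i | each a_i d-classical} be the set of all infima of families of d-classical properties. Then with ξ'(p) = ξ(p) ∩ C', the triple (Σ, C', ξ') is a state property system, where C' carries the partial order and infima inherited from L (and suprema defined as the infimum of all upper bounds in C'). -/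
/-- The d-classical property lattice: all infima of families of
d-classical properties. -/
def dClassicalLattice {S L : Type*} [CompleteLattice L] (T : SPS S L) : Set L :=
  {x | ∃ A : Set L, (∀ b ∈ A, T.dclassical b) ∧ x = sInf A}


lemma dCL_sInf_closed {S L : Type*} [CompleteLattice L] (T : SPS S L)
    (A : Set L) (hA : A ⊆ dClassicalLattice T) : sInf A ∈ dClassicalLattice T := by
  choose B hB hEq using fun a (ha : a ∈ A) => hA ha
  refine ⟨⋃ a ∈ A, ⋃ h : a ∈ A, B a h, ?_, ?_⟩
  · intro b hb
    simp only [Set.mem_iUnion] at hb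
    obtain ⟨a, ha, _, hb⟩ := hb
    exact hB a _ b hb
  · apply le_antisymm
    · apply le_sInf
      intro b hb
      simp only [Set.mem_iUnion] at hb
      obtain ⟨a, ha, _, hb⟩ := hb
      exact le_trans (sInf_le ha) ((hEq a ha).le.trans (sInf_le hb))
    · apply le_sInf
      intro a ha
      rw [hEq a ha]
      apply le_sInf
      intro b hb
      apply sInf_le
      simp only [Set.mem_iUnion]
      exact ⟨a, ha, ha, hb⟩

theorem stmt19 {S L : Type*} [CompleteLattice L] (T : SPS S L) :
    let C' := dClassicalLattice T
    let xi' : S → Set L := fun p => T.xi p ∩ C'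
    (∀ p, (⊥ : L) ∉ xi' p) ∧
    (∀ p, ∀ A : Set L, A ⊆ xi' p → sInf A ∈ xi' p) ∧
    (∀ a ∈ C', ∀ b ∈ C', (a ≤ b ↔ ∀ p, a ∈ xi' p → b ∈ xi' p)) := by
  intro C' xi'
  refine ⟨fun p h => T.bot_not_mem p h.1, ?_, ?_⟩
  · intro p A hA
    exact ⟨T.sInf_mem p A (fun a ha => (hA ha).1),
      dCL_sInf_closed T A (fun a ha => (hA ha).2)⟩
  · intro a haC b hbC
    constructor
    · intro hab p hp
      exact ⟨(T.le_iff a b).1 hab p hp.1, hbC⟩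
    · intro h
      exact (T.le_iff a b).2 fun p hp => (h p ⟨hp, haC⟩).1
end
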